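/- arXiv:math/0611855 — 3 statements merged into one kernel-verified Lean document; each statement's English description precedes it below -/
import Mathlib

section
/- Let c, a ∈ ℝ and let λ ∈ ℂ with Re λ > a. Let s = (c² + 4(λ − a))^{1/2} be the principal complex square root, and set μ₁ = (−c + s)/2 and μ₂ = (−c − s)/2. Then Re μ₁ > 0 and Re μ₂ < 0. -/
theorem stmt_1 (c a : ℝ) (lam : ℂ) (hlam : lam.re > a)
    (s mu1 mu2 : ℂ)
    (hs : s = ((c : ℂ) ^ 2 + 4 * (lam - (a : ℂ))) ^ ((1 : ℂ) / 2))
    (hmu1 : mu1 = (-(c : ℂ) + s) / 2)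
    (hmu2 : mu2 = (-(c : ℂ) - s) / 2) :
    mu1.re > 0 ∧ mu2.re < 0 := by
  set z : ℂ := (c : ℂ) ^ 2 + 4 * (lam - (a : ℂ)) with hz
  have hzre : z.re = c ^ 2 + 4 * (lam.re - a) := by
    simp [hz, pow_two, Complex.mul_re, Complex.mul_im]
  have hzre' : z.re > c ^ 2 := by
    rw [hzre]; nlinarith
  -- s ^ 2 = z
  have hsq : s ^ 2 = z := by
    rw [hs]
    have : ((1 : ℂ) / 2) = (((2 : ℕ) : ℂ))⁻¹ := by norm_num
    rw [this]
    exact Complex.cpow_nat_inv_pow z two_ne_zero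
  -- real part of s is nonnegative
  have hsre_nonneg : 0 ≤ s.re := by
    rw [hs]
    have h12 : ((1 : ℂ) / 2) = (((1 / 2 : ℝ)) : ℂ) := by norm_num
    rw [h12, Complex.cpow_ofReal_re]
    apply mul_nonneg (Real.rpow_nonneg (norm_nonneg _) _)
    apply Real.cos_nonneg_of_mem_Icc
    constructor
    · have := Complex.neg_pi_lt_arg z
      nlinarith [Real.pi_pos]
    · have := Complex.arg_le_pi z
      nlinarith [Real.pi_pos]
  have hre2 : s.re ^ 2 - s.im ^ 2 = z.re := by
    rw [← hsq]; simp [pow_two, Complex.mul_re]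
  have hkey : s.re ^ 2 > c ^ 2 := by nlinarith
  have hc : |c| < s.re := by
    nlinarith [abs_nonneg c, sq_abs c]
  constructor
  · rw [hmu1]; simp [Complex.div_re]
    nlinarith [le_abs_self c, neg_abs_le c]
  · rw [hmu2]; simp [Complex.div_re]
    nlinarith [le_abs_self c, neg_abs_le c]
end

section
/- Let λ, c, p ∈ ℂ, let φ : ℝ → ℂ, and let μ₁, μ₂ ∈ ℂ satisfy μᵢ² + c·μᵢ = λ − p for i = 1, 2, with κ := μ₁ − μ₂ ≠ 0. Set B = [[1, 1], [μ₁, μ₂]] and A(ξ) = [[0, 1], [λ − p − φ(ξ), −c]]. Suppose y : ℝ → ℂ² is differentiable and satisfies y'(ξ) = A(ξ)·y(ξ) for all ξ ∈ ℝ. Define ȳ(ξ) = exp(−μ₁ξ)·B⁻¹·y(ξ) with components ȳ = (ū, v̄). Then for all ξ ∈ ℝ: ū'(ξ) = −(φ(ξ)/κ)·ū(ξ) − (φ(ξ)/κ)·v̄(ξ) and v̄'(ξ) = (φ(ξ)/κ)·ū(ξ) − (κ − φ(ξ)/κ)·v̄(ξ). -/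
theorem stmt_3 (lam c p : ℂ) (phi : ℝ → ℂ) (mu1 mu2 : ℂ)
    (h1 : mu1 ^ 2 + c * mu1 = lam - p)
    (h2 : mu2 ^ 2 + c * mu2 = lam - p)
    (kappa : ℂ) (hk : kappa = mu1 - mu2) (hk0 : kappa ≠ 0)
    (B : Matrix (Fin 2) (Fin 2) ℂ) (hB : B = !![1, 1; mu1, mu2])
    (A : ℝ → Matrix (Fin 2) (Fin 2) ℂ)
    (hA : ∀ ξ : ℝ, A ξ = !![0, 1; lam - p - phi ξ, -c])
    (y : ℝ → Fin 2 → ℂ)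
    (hy : ∀ ξ : ℝ, HasDerivAt y ((A ξ).mulVec (y ξ)) ξ)
    (ybar : ℝ → Fin 2 → ℂ)
    (hybar : ∀ ξ : ℝ, ybar ξ = Complex.exp (-mu1 * ξ) • B⁻¹.mulVec (y ξ)) :
    ∀ ξ : ℝ,
      HasDerivAt (fun t => ybar t 0)
        (-(phi ξ / kappa) * ybar ξ 0 - (phi ξ / kappa) * ybar ξ 1) ξ ∧
      HasDerivAt (fun t => ybar t 1)
        ((phi ξ / kappa) * ybar ξ 0 - (kappa - phi ξ / kappa) * ybar ξ 1) ξ := by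
  have hk' : mu1 - mu2 ≠ 0 := hk ▸ hk0
  have hd0 : mu2 - mu1 ≠ 0 := fun h => hk' (by linear_combination -h)
  have hsum : mu1 + mu2 + c = 0 := by
    have h : (mu1 - mu2) * (mu1 + mu2 + c) = 0 := by linear_combination h1 - h2
    rcases mul_eq_zero.1 h with h' | h'
    · exact absurd h' hk'
    · exact h'
  have hc : c = -mu1 - mu2 := by linear_combination hsum
  have hdet : B.det = mu2 - mu1 := by
    rw [hB, Matrix.det_fin_two_of]; ring
  have hBinv : B⁻¹ = (mu2 - mu1)⁻¹ • !![mu2, -1; -mu1, 1] := by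
    rw [Matrix.inv_def, hdet, hB, Matrix.adjugate_fin_two_of, Ring.inverse_eq_inv']
  have hyb0 : ∀ t : ℝ, ybar t 0
      = Complex.exp (-mu1 * t) * ((mu2 - mu1)⁻¹ * (mu2 * y t 0 - y t 1)) := by
    intro t
    rw [hybar, hBinv]
    simp [Matrix.mulVec, dotProduct, Fin.sum_univ_two]
    ring
  have hyb1 : ∀ t : ℝ, ybar t 1
      = Complex.exp (-mu1 * t) * ((mu2 - mu1)⁻¹ * (-mu1 * y t 0 + y t 1)) := by
    intro t
    rw [hybar, hBinv]
    simp [Matrix.mulVec, dotProduct, Fin.sum_univ_two]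
    ring
  intro ξ
  have hyξ := hy ξ
  rw [hA ξ] at hyξ
  have hpi := hasDerivAt_pi.1 hyξ
  have hc0 : HasDerivAt (fun t => y t 0) (y ξ 1) ξ := by
    have := hpi 0
    simpa [Matrix.mulVec, dotProduct, Fin.sum_univ_two] using this
  have hc1 : HasDerivAt (fun t => y t 1)
      ((lam - p - phi ξ) * y ξ 0 - c * y ξ 1) ξ := by
    have := hpi 1
    simpa [Matrix.mulVec, dotProduct, Fin.sum_univ_two, sub_eq_add_neg,
      neg_mul, mul_comm] using this
  have hexp : HasDerivAt (fun t : ℝ => Complex.exp (-mu1 * t))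
      (Complex.exp (-mu1 * ξ) * -mu1) ξ := by
    have hl : HasDerivAt (fun t : ℝ => -mu1 * (t : ℂ)) (-mu1) ξ := by
      simpa using (Complex.ofRealCLM.hasDerivAt (x := ξ)).const_mul (-mu1)
    simpa using hl.cexp
  constructor
  · have hu : HasDerivAt
        (fun t : ℝ => Complex.exp (-mu1 * t) * ((mu2 - mu1)⁻¹ * (mu2 * y t 0 - y t 1)))
        (Complex.exp (-mu1 * ξ) * -mu1 * ((mu2 - mu1)⁻¹ * (mu2 * y ξ 0 - y ξ 1))
          + Complex.exp (-mu1 * ξ) * ((mu2 - mu1)⁻¹ * (mu2 * y ξ 1 - ((lam - p - phi ξ) * y ξ 0 - c * y ξ 1)))) ξ :=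
      hexp.mul (((hc0.const_mul mu2).sub hc1).const_mul _)
    have hfun : (fun t => ybar t 0)
        = fun t : ℝ => Complex.exp (-mu1 * t) * ((mu2 - mu1)⁻¹ * (mu2 * y t 0 - y t 1)) :=
      funext hyb0
    rw [hfun, hyb0 ξ, hyb1 ξ, hk]
    convert hu using 1
    rw [← h1, hc]
    field_simp
    ring
  · have hv : HasDerivAt
        (fun t : ℝ => Complex.exp (-mu1 * t) * ((mu2 - mu1)⁻¹ * (-mu1 * y t 0 + y t 1)))
        (Complex.exp (-mu1 * ξ) * -mu1 * ((mu2 - mu1)⁻¹ * (-mu1 * y ξ 0 + y ξ 1))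
          + Complex.exp (-mu1 * ξ) * ((mu2 - mu1)⁻¹ * (-mu1 * y ξ 1 + ((lam - p - phi ξ) * y ξ 0 - c * y ξ 1)))) ξ :=
      hexp.mul (((hc0.const_mul (-mu1)).add hc1).const_mul _)
    have hfun : (fun t => ybar t 1)
        = fun t : ℝ => Complex.exp (-mu1 * t) * ((mu2 - mu1)⁻¹ * (-mu1 * y t 0 + y t 1)) :=
      funext hyb1
    rw [hfun, hyb0 ξ, hyb1 ξ, hk]
    convert hv using 1
    rw [← h1, hc]
    field_simp
    ring
end

section
/- Let a ∈ ℝ, h > 0, K ≥ 0, and let f : ℝ → ℝ be three times continuously differentiable on [a, a + h] with |f'''(x)| ≤ K for all x ∈ [a, a + h]. Then |(√3/12)·h·(f(a + (½ + √3/6)h) − f(a + (½ − √3/6)h)) − (1/12)·h²·f'(a + h/2)| ≤ K·h⁴/864. -/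
/-! With `m = a + h/2` and `δ = √3 h/6` the two nodes are `m ± δ`, and since
`(√3/12) h · 2δ = h²/12` the quantity to bound is `(√3/12) h · (f(m+δ) - f(m-δ) - 2δ f'(m))`.
Expanding `f(m ± δ)` to second order at `m` with Lagrange remainders, the constant and quadratic
terms cancel in the difference and each remainder is at most `K δ³/6`; hence the bound
`(√3/12) h · K δ³/3 = K h⁴/864`. -/

open Set Nat

theorem abs_sub_taylorWithinEval_le {f : ℝ → ℝ} {x₀ x C : ℝ} {n : ℕ} (hx : x₀ ≠ x)
    (hf : ContDiffOn ℝ (n + 1) f (uIcc x₀ x))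
    (hC : ∀ y ∈ uIoo x₀ x, |iteratedDeriv (n + 1) f y| ≤ C) :
    |f x - taylorWithinEval f n (uIcc x₀ x) x₀ x| ≤ C * |x - x₀| ^ (n + 1) / (n + 1)! := by
  obtain ⟨y, hy, hrem⟩ := taylor_mean_remainder_lagrange_iteratedDeriv hx hf
  rw [hrem, abs_div, abs_mul, abs_pow, Nat.abs_cast]
  gcongr
  exact hC y hy

theorem taylorWithinEval_eq_sum_iteratedDeriv {f : ℝ → ℝ} {s : Set ℝ} {x₀ x : ℝ} {n : ℕ}
    (hs : UniqueDiffOn ℝ s) (hx₀ : x₀ ∈ s) (hf : ContDiffAt ℝ n f x₀) :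
    taylorWithinEval f n s x₀ x =
      ∑ k ∈ Finset.range (n + 1), iteratedDeriv k f x₀ / k ! * (x - x₀) ^ k := by
  rw [taylor_within_apply]
  refine Finset.sum_congr rfl fun k hk => ?_
  rw [iteratedDerivWithin_eq_iteratedDeriv hs (hf.of_le ?_) hx₀, smul_eq_mul]
  · ring
  · exact_mod_cast Nat.lt_succ_iff.mp (Finset.mem_range.mp hk)

theorem abs_sub_sub_two_mul_deriv_le {f : ℝ → ℝ} {m δ K : ℝ} (hδ : 0 < δ)
    (hf : ContDiffOn ℝ 3 f (Icc (m - δ) (m + δ)))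
    (hK : ∀ y ∈ Ioo (m - δ) (m + δ), |iteratedDeriv 3 f y| ≤ K) :
    |f (m + δ) - f (m - δ) - 2 * δ * deriv f m| ≤ K * δ ^ 3 / 3 := by
  have hm : ContDiffAt ℝ 2 f m :=
    (hf.contDiffAt (Icc_mem_nhds (by linarith) (by linarith))).of_le (by norm_num)
  have taylor (x : ℝ) (hx : m ≠ x) (hxδ : |x - m| = δ) :
      |f x - (f m + deriv f m * (x - m) + iteratedDeriv 2 f m / 2 * (x - m) ^ 2)|
        ≤ K * δ ^ 3 / 6 := by
    have hsub : uIcc m x ⊆ Icc (m - δ) (m + δ) := by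
      obtain ⟨hxl, hxr⟩ := abs_le.mp hxδ.le
      exact uIcc_subset_Icc ⟨by linarith, by linarith⟩ ⟨by linarith, by linarith⟩
    have hsub' : uIoo m x ⊆ Ioo (m - δ) (m + δ) := by
      simpa only [uIcc, uIoo, interior_Icc] using interior_mono hsub
    have hbound :=
      abs_sub_taylorWithinEval_le (n := 2) hx (hf.mono hsub) fun y hy => hK y (hsub' hy)
    rw [taylorWithinEval_eq_sum_iteratedDeriv (uniqueDiffOn_uIcc hx) left_mem_uIcc hm] at hbound
    simpa [Finset.sum_range_succ, hxδ, Nat.factorial] using hbound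
  have hplus := taylor (m + δ) (by linarith) (by simp [abs_of_pos hδ])
  have hminus := taylor (m - δ) (by linarith) (by simp [abs_of_pos hδ])
  calc |f (m + δ) - f (m - δ) - 2 * δ * deriv f m|
      = |(f (m + δ) - (f m + deriv f m * (m + δ - m) + iteratedDeriv 2 f m / 2 * (m + δ - m) ^ 2))
          - (f (m - δ) - (f m + deriv f m * (m - δ - m)
            + iteratedDeriv 2 f m / 2 * (m - δ - m) ^ 2))| := by ring_nf
    _ ≤ K * δ ^ 3 / 6 + K * δ ^ 3 / 6 := (abs_sub _ _).trans (add_le_add hplus hminus)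
    _ = K * δ ^ 3 / 3 := by ring

theorem stmt_15_general (a h K : ℝ) (hh : 0 < h) (f : ℝ → ℝ)
    (hf : ContDiffOn ℝ 3 f (Set.Icc a (a + h)))
    (hbound : ∀ x ∈ Set.Icc a (a + h),
      |iteratedDerivWithin 3 f (Set.Icc a (a + h)) x| ≤ K) :
    |Real.sqrt 3 / 12 * h * (f (a + (1 / 2 + Real.sqrt 3 / 6) * h)
                              - f (a + (1 / 2 - Real.sqrt 3 / 6) * h))
        - 1 / 12 * h ^ 2 * derivWithin f (Set.Icc a (a + h)) (a + h / 2)|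
      ≤ K * h ^ 4 / 864 := by
  have hsq : Real.sqrt 3 ^ 2 = 3 := Real.sq_sqrt (by norm_num)
  have hsqlt : Real.sqrt 3 < 3 := by nlinarith [Real.sqrt_nonneg 3]
  set m := a + h / 2
  set δ := Real.sqrt 3 / 6 * h with hδdef
  have hδ : 0 < δ := by positivity
  have hδh : δ < h / 2 := by rw [hδdef]; nlinarith
  have hright : a + (1 / 2 + Real.sqrt 3 / 6) * h = m + δ := by ring
  have hleft : a + (1 / 2 - Real.sqrt 3 / 6) * h = m - δ := by ring
  have hsub : Icc (m - δ) (m + δ) ⊆ Ioo a (a + h) :=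
    Icc_subset_Ioo (by linarith) (by linarith)
  have hfAt {y : ℝ} (hy : y ∈ Icc (m - δ) (m + δ)) : ContDiffAt ℝ 3 f y :=
    hf.contDiffAt (Icc_mem_nhds (hsub hy).1 (hsub hy).2)
  have hderiv : derivWithin f (Icc a (a + h)) m = deriv f m :=
    derivWithin_of_mem_nhds (Icc_mem_nhds (by linarith) (by linarith))
  have hK3 (y : ℝ) (hy : y ∈ Ioo (m - δ) (m + δ)) : |iteratedDeriv 3 f y| ≤ K := by
    have hy' := Ioo_subset_Icc_self hy
    rw [← iteratedDerivWithin_eq_iteratedDeriv (uniqueDiffOn_Icc (by linarith)) (hfAt hy')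
      (Ioo_subset_Icc_self (hsub hy'))]
    exact hbound y (Ioo_subset_Icc_self (hsub hy'))
  have hsym := abs_sub_sub_two_mul_deriv_le hδ (hf.mono (hsub.trans Ioo_subset_Icc_self)) hK3
  have hc : 0 < Real.sqrt 3 / 12 * h := by positivity
  calc _ = |Real.sqrt 3 / 12 * h * (f (m + δ) - f (m - δ) - 2 * δ * deriv f m)| := by
        rw [hright, hleft, hderiv]
        congr 1
        linear_combination (h ^ 2 * deriv f m / 36) * hsq
    _ = Real.sqrt 3 / 12 * h * |f (m + δ) - f (m - δ) - 2 * δ * deriv f m| := by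
        rw [abs_mul, abs_of_pos hc]
    _ ≤ Real.sqrt 3 / 12 * h * (K * δ ^ 3 / 3) := by gcongr
    _ = K * h ^ 4 / 864 := by linear_combination (K * h ^ 4 / 7776) * (Real.sqrt 3 ^ 2 + 3) * hsq

theorem stmt_15 (a h K : ℝ) (hh : 0 < h) (hK : 0 ≤ K) (f : ℝ → ℝ)
    (hf : ContDiffOn ℝ 3 f (Set.Icc a (a + h)))
    (hbound : ∀ x ∈ Set.Icc a (a + h),
      |iteratedDerivWithin 3 f (Set.Icc a (a + h)) x| ≤ K) :
    |Real.sqrt 3 / 12 * h * (f (a + (1 / 2 + Real.sqrt 3 / 6) * h)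
                              - f (a + (1 / 2 - Real.sqrt 3 / 6) * h))
        - 1 / 12 * h ^ 2 * derivWithin f (Set.Icc a (a + h)) (a + h / 2)|
      ≤ K * h ^ 4 / 864 :=
  stmt_15_general a h K hh f hf hbound
end
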